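/- Let ℓ > r + 1 and r > k ≥ 2 be integers. For sufficiently large n, ex_r(n, Berge-(S_ℓ ∪ M_{k-1})) ≤ (n/ℓ)·C(ℓ, r), and this bound is attained whenever ℓ divides n. -/

import Mathlib

open Finset

/-- A Berge copy of the graph `F` in the hypergraph `H`: an injective embedding of the
vertices of `F` together with an injective assignment of distinct hyperedges to the
edges of `F`, each hyperedge containing (the images of) both endpoints of its edge. -/
def IsBergeCopy {α V : Type*} (F : SimpleGraph α) (H : Finset (Finset V)) : Prop :=
  ∃ (f : α → V) (φ : Sym2 α → Finset V),
    Function.Injective f ∧ Set.InjOn φ F.edgeSet ∧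
    ∀ e ∈ F.edgeSet, φ e ∈ H ∧ ∀ x ∈ e, f x ∈ φ e

/-- The Turán number `ex_r(n, Berge-F)`: the maximum number of hyperedges in an
`n`-vertex `r`-uniform hypergraph with no Berge copy of `F`. -/
noncomputable def exBerge {α : Type*} (r n : ℕ) (F : SimpleGraph α) : ℕ :=
  sSup {m | ∃ H : Finset (Finset (Fin n)),
    (∀ e ∈ H, e.card = r) ∧ ¬ IsBergeCopy F H ∧ H.card = m}

/-- The path with `ℓ` edges, on `ℓ+1` vertices. -/
def pathG (ℓ : ℕ) : SimpleGraph (Fin (ℓ + 1)) :=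
  SimpleGraph.fromRel (fun x y => (x : ℕ) + 1 = (y : ℕ))

/-- `c` vertex-disjoint stars, each with `ℓ` edges (centers are the vertices `(i, 0)`). -/
def starsG (c ℓ : ℕ) : SimpleGraph (Fin c × Fin (ℓ + 1)) :=
  SimpleGraph.fromRel (fun x y => x.1 = y.1 ∧ x.2 = 0)

/-- A matching with `t` edges. -/
def matchingG (t : ℕ) : SimpleGraph (Fin t × Fin 2) :=
  SimpleGraph.fromRel (fun x y => x.1 = y.1)

/-- Vertex-disjoint union of `k` paths, the `i`-th having `ℓ i` edges. -/
def pathsG (k : ℕ) (ℓ : Fin k → ℕ) : SimpleGraph (Σ i : Fin k, Fin (ℓ i + 1)) :=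
  SimpleGraph.fromRel (fun x y => x.1 = y.1 ∧ (x.2 : ℕ) + 1 = (y.2 : ℕ))

/-- A hypergraph is connected if every two vertices are joined by a walk of hyperedges
(equivalently, lie on a common Berge path). -/
def HyperConnected {V : Type*} (H : Finset (Finset V)) : Prop :=
  ∀ u v : V, Relation.ReflTransGen (fun a b => ∃ e ∈ H, a ∈ e ∧ b ∈ e) u v

/-- The connected Turán number `ex^con_r(n, Berge-F)`. -/
noncomputable def exConBerge {α : Type*} (r n : ℕ) (F : SimpleGraph α) : ℕ :=
  sSup {m | ∃ H : Finset (Finset (Fin n)),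
    (∀ e ∈ H, e.card = r) ∧ HyperConnected H ∧ ¬ IsBergeCopy F H ∧ H.card = m}

/-!
Upper bound: in an `r`-uniform Berge-`(S_ℓ ∪ M_t)`-free hypergraph `H` no `(r - 1)`-set lies in
`ℓ + t` hyperedges, since such a sunflower already contains the forbidden graph. Hence, once `H`
has more than a constant number of hyperedges, a Berge copy of a graph on boundedly many vertices
extends by a disjoint Berge edge: only boundedly many hyperedges are already used or meet its
vertex set in `r - 1` vertices. Adding `t` edges to a Berge `S_ℓ` is therefore impossible, so `H`
has no Berge `S_ℓ`; Hall's theorem with deficiency, applied to the link of a vertex, then bounds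
every degree by `C(ℓ - 1, r - 1)`, and double counting gives `|H| r ≤ n C(ℓ - 1, r - 1)`, that is
`|H| ℓ ≤ n C(ℓ, r)`.

Lower bound: `n / ℓ` disjoint copies of the complete `r`-graph on `ℓ` vertices have no Berge
`S_ℓ`, whose `ℓ + 1` vertices would lie in one copy.
-/

open SimpleGraph

variable {α β V : Type*}

def IsBergeEmbedding (F : SimpleGraph α) (H : Finset (Finset V)) (f : α → V)
    (φ : Sym2 α → Finset V) : Prop :=
  Function.Injective f ∧ Set.InjOn φ F.edgeSet ∧ ∀ e ∈ F.edgeSet, φ e ∈ H ∧ ∀ x ∈ e, f x ∈ φ e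

section BergeEmbedding

variable {F : SimpleGraph α} {H : Finset (Finset V)}

theorem IsBergeEmbedding.isBergeCopy {f : α → V} {φ : Sym2 α → Finset V}
    (h : IsBergeEmbedding F H f φ) : IsBergeCopy F H :=
  ⟨f, φ, h⟩

theorem exists_isBergeEmbedding_of_cover {ι : Type*} {f : α → V} (hf : Function.Injective f)
    (edge : ι → Sym2 α) (hcover : ∀ e ∈ F.edgeSet, ∃ i, edge i = e) (hyper : ι → Finset V)
    (hyper_inj : Function.Injective hyper) (hyper_mem : ∀ i, hyper i ∈ H)
    (hmem : ∀ i, ∀ x ∈ edge i, f x ∈ hyper i) :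
    ∃ φ, IsBergeEmbedding F H f φ ∧ ∀ e ∈ F.edgeSet, φ e ∈ Set.range hyper := by
  classical
  let φ : Sym2 α → Finset V := fun e => if h : ∃ i, edge i = e then hyper h.choose else ∅
  have hφ : ∀ e (he : e ∈ F.edgeSet), φ e = hyper (hcover e he).choose ∧
      edge (hcover e he).choose = e :=
    fun e he => ⟨dif_pos (hcover e he), (hcover e he).choose_spec⟩
  refine ⟨φ, ⟨hf, fun e he e' he' hee' => ?_, fun e he => ?_⟩, fun e he => ⟨_, (hφ e he).1.symm⟩⟩
  · rw [(hφ e he).1, (hφ e' he').1] at hee'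
    rw [← (hφ e he).2, ← (hφ e' he').2, hyper_inj hee']
  · rw [(hφ e he).1]
    exact ⟨hyper_mem _, fun x hx => hmem _ x (by rwa [(hφ e he).2])⟩

end BergeEmbedding

theorem exists_eq_map_of_mem_edgeSet_sum {F₁ : SimpleGraph α} {F₂ : SimpleGraph β}
    {e : Sym2 (α ⊕ β)} (he : e ∈ (F₁ ⊕g F₂).edgeSet) :
    (∃ e₁ ∈ F₁.edgeSet, e₁.map Sum.inl = e) ∨ ∃ e₂ ∈ F₂.edgeSet, e₂.map Sum.inr = e := by
  induction e using Sym2.ind with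
  | _ a b =>
    rcases a with a | a <;> rcases b with b | b <;> simp only [mem_edgeSet, sum_adj] at he
    · exact .inl ⟨s(a, b), he, rfl⟩
    · exact .inr ⟨s(a, b), he, rfl⟩

theorem IsBergeCopy.mono {F : SimpleGraph α} {F' : SimpleGraph β} {H : Finset (Finset V)}
    (hF' : F' ⊑ F) (h : IsBergeCopy F H) : IsBergeCopy F' H := by
  obtain ⟨g⟩ := hF'
  obtain ⟨f, φ, hf, hφ, hH⟩ := h
  have hg : ∀ {e}, e ∈ F'.edgeSet → e.map g ∈ F.edgeSet := g.toHom.map_mem_edgeSet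
  refine ⟨f ∘ g, φ ∘ Sym2.map g, hf.comp g.injective, ?_, fun e he => ?_⟩
  · exact fun e he e' he' hee' => Sym2.map.injective g.injective (hφ (hg he) (hg he') hee')
  · obtain ⟨hφH, hφmem⟩ := hH _ (hg he)
    exact ⟨hφH, fun x hx => hφmem _ (Sym2.mem_map.2 ⟨x, hx, rfl⟩)⟩

theorem IsBergeEmbedding.sum {F₁ : SimpleGraph α} {F₂ : SimpleGraph β} {H : Finset (Finset V)}
    {f₁ : α → V} {f₂ : β → V} {φ₁ : Sym2 α → Finset V} {φ₂ : Sym2 β → Finset V}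
    (h₁ : IsBergeEmbedding F₁ H f₁ φ₁) (h₂ : IsBergeEmbedding F₂ H f₂ φ₂)
    (hf : ∀ a b, f₁ a ≠ f₂ b) (hφ : ∀ e₁ ∈ F₁.edgeSet, ∀ e₂ ∈ F₂.edgeSet, φ₁ e₁ ≠ φ₂ e₂) :
    IsBergeCopy (F₁ ⊕g F₂) H := by
  obtain ⟨φ, hφ', -⟩ := exists_isBergeEmbedding_of_cover (F := F₁ ⊕g F₂) (H := H)
    (h₁.1.sumElim h₂.1 hf)
    (Sum.elim (fun e : F₁.edgeSet => (e : Sym2 α).map Sum.inl)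
      (fun e : F₂.edgeSet => (e : Sym2 β).map Sum.inr))
    (fun e he => by
      rcases exists_eq_map_of_mem_edgeSet_sum he with ⟨e₁, he₁, rfl⟩ | ⟨e₂, he₂, rfl⟩
      exacts [⟨.inl ⟨e₁, he₁⟩, rfl⟩, ⟨.inr ⟨e₂, he₂⟩, rfl⟩])
    (Sum.elim (fun e : F₁.edgeSet => φ₁ e) (fun e : F₂.edgeSet => φ₂ e))
    (Function.Injective.sumElim (fun e e' h => Subtype.ext (h₁.2.1 e.2 e'.2 h))
      (fun e e' h => Subtype.ext (h₂.2.1 e.2 e'.2 h)) (fun e₁ e₂ => hφ e₁ e₁.2 e₂ e₂.2))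
    (by rintro (e | e); exacts [(h₁.2.2 e e.2).1, (h₂.2.2 e e.2).1])
    (by
      rintro (e | e) _ hx <;> simp only [Sum.elim_inl, Sum.elim_inr] at hx <;>
        obtain ⟨x, hxe, rfl⟩ := Sym2.mem_map.1 hx
      exacts [(h₁.2.2 e e.2).2 x hxe, (h₂.2.2 e e.2).2 x hxe])
  exact hφ'.isBergeCopy

theorem exists_eq_of_mem_edgeSet_starsG_one {ℓ : ℕ} {e : Sym2 (Fin 1 × Fin (ℓ + 1))}
    (he : e ∈ (starsG 1 ℓ).edgeSet) : ∃ i : Fin ℓ, s((0, 0), (0, i.succ)) = e := by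
  induction e using Sym2.ind with
  | _ a b =>
    obtain ⟨a₁, a₂⟩ := a
    obtain ⟨b₁, b₂⟩ := b
    obtain rfl : a₁ = 0 := Subsingleton.elim _ _
    obtain rfl : b₁ = 0 := Subsingleton.elim _ _
    simp only [starsG, mem_edgeSet, fromRel_adj, ne_eq, Prod.mk.injEq, true_and] at he
    rcases he with ⟨hab, rfl | rfl⟩
    · obtain ⟨i, rfl⟩ := Fin.exists_succ_eq.2 (Ne.symm hab)
      exact ⟨i, rfl⟩
    · obtain ⟨i, rfl⟩ := Fin.exists_succ_eq.2 hab
      exact ⟨i, Sym2.eq_swap⟩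

theorem exists_eq_of_mem_edgeSet_matchingG {t : ℕ} {e : Sym2 (Fin t × Fin 2)}
    (he : e ∈ (matchingG t).edgeSet) : ∃ j, s((j, 0), (j, 1)) = e := by
  induction e using Sym2.ind with
  | _ a b =>
    obtain ⟨j, a₂⟩ := a
    obtain ⟨j', b₂⟩ := b
    simp only [matchingG, mem_edgeSet, fromRel_adj, ne_eq, Prod.mk.injEq] at he
    obtain ⟨hab, rfl | rfl⟩ := he <;>
      fin_cases a₂ <;> fin_cases b₂ <;> simp_all [Sym2.eq_swap]

theorem exists_isBergeEmbedding_starsG_one {ℓ : ℕ} {H : Finset (Finset V)} {v : V}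
    {x : Fin ℓ → V} (hx : Function.Injective x) (hxv : ∀ i, x i ≠ v) {es : Fin ℓ → Finset V}
    (hes : Function.Injective es) (hesH : ∀ i, es i ∈ H) (hves : ∀ i, v ∈ es i)
    (hxes : ∀ i, x i ∈ es i) :
    ∃ φ, IsBergeEmbedding (starsG 1 ℓ) H (fun p => (Fin.cons v x : Fin (ℓ + 1) → V) p.2) φ ∧
      ∀ e ∈ (starsG 1 ℓ).edgeSet, φ e ∈ Set.range es := by
  refine exists_isBergeEmbedding_of_cover (fun p q hpq => ?_) (fun i => s((0, 0), (0, i.succ)))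
    (fun e he => exists_eq_of_mem_edgeSet_starsG_one he) es hes hesH fun i y hy => ?_
  · exact Prod.ext (Subsingleton.elim _ _)
      (Fin.cons_injective_iff.2 ⟨fun ⟨i, hi⟩ => hxv i hi, hx⟩ hpq)
  · rcases Sym2.mem_iff.1 hy with rfl | rfl
    · simpa using hves i
    · simpa using hxes i

theorem exists_isBergeEmbedding_matchingG {t : ℕ} {H : Finset (Finset V)}
    {m : Fin t × Fin 2 → V} (hm : Function.Injective m) {gs : Fin t → Finset V}
    (hgs : Function.Injective gs) (hgsH : ∀ j, gs j ∈ H) (hmgs : ∀ j b, m (j, b) ∈ gs j) :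
    ∃ φ, IsBergeEmbedding (matchingG t) H m φ ∧
      ∀ e ∈ (matchingG t).edgeSet, φ e ∈ Set.range gs :=
  exists_isBergeEmbedding_of_cover hm (fun j => s((j, 0), (j, 1)))
    (fun _ he => exists_eq_of_mem_edgeSet_matchingG he) gs hgs hgsH
    fun j _ hy => by rcases Sym2.mem_iff.1 hy with rfl | rfl <;> exact hmgs _ _

theorem sum_matchingG_zero_isContained (F : SimpleGraph α) : F ⊕g matchingG 0 ⊑ F :=
  ⟨⟨⟨Sum.elim id fun q => q.1.elim0, by
    rintro (a | q) (b | q') h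
    exacts [h, q'.1.elim0, q.1.elim0, q.1.elim0]⟩, by
    rintro (a | q) (b | q') h
    exacts [congrArg _ h, q'.1.elim0, q.1.elim0, q.1.elim0]⟩⟩

theorem sum_matchingG_succ_isContained (F : SimpleGraph α) (j : ℕ) :
    F ⊕g matchingG (j + 1) ⊑ (F ⊕g matchingG j) ⊕g matchingG 1 := by
  let g : Fin (j + 1) × Fin 2 → (α ⊕ Fin j × Fin 2) ⊕ Fin 1 × Fin 2 := fun q =>
    Fin.lastCases (.inr (0, q.2)) (fun i => .inl (.inr (i, q.2))) q.1
  refine ⟨⟨⟨Sum.elim (Sum.inl ∘ Sum.inl) g, ?_⟩, ?_⟩⟩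
  · rintro (a | ⟨i, x⟩) (b | ⟨i', y⟩) h
    · simpa using h
    · simp at h
    · simp at h
    · simp only [matchingG, fromRel_adj, sum_adj, ne_eq, Prod.mk.injEq] at h
      obtain ⟨hxy, hii'⟩ := h
      obtain rfl : i = i' := hii'.elim id Eq.symm
      induction i using Fin.lastCases <;> simp_all [g, matchingG]
  · rintro (a | ⟨i, x⟩) (b | ⟨i', y⟩) h
    · simpa using h
    · induction i' using Fin.lastCases <;> simp_all [g]
    · induction i using Fin.lastCases <;> simp_all [g]
    · induction i using Fin.lastCases <;> induction i' using Fin.lastCases <;>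
        simp_all [g]

section Greedy

variable [DecidableEq V] {H : Finset (Finset V)} {r D : ℕ}

theorem card_filter_le_card_inter_le {s : ℕ}
    (hD : ∀ S : Finset V, #S = s → #{e ∈ H | S ⊆ e} ≤ D) (T : Finset V) :
    #{e ∈ H | s ≤ #(e ∩ T)} ≤ (#T).choose s * D := by
  calc #{e ∈ H | s ≤ #(e ∩ T)}
      ≤ #((T.powersetCard s).biUnion fun S => {e ∈ H | S ⊆ e}) := card_le_card fun e he => by
        rw [mem_filter] at he
        obtain ⟨S, hS, hScard⟩ := exists_subset_card_eq he.2
        exact mem_biUnion.2 ⟨S, mem_powersetCard.2 ⟨hS.trans inter_subset_right, hScard⟩,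
          mem_filter.2 ⟨he.1, hS.trans inter_subset_left⟩⟩
    _ ≤ #(T.powersetCard s) * D :=
        card_biUnion_le_card_mul _ _ _ fun S hS => hD S (mem_powersetCard.1 hS).2
    _ = (#T).choose s * D := by rw [card_powersetCard]

/-- A hyperedge that is not used by the copy of `F` and meets its vertex set in at most `r - 2`
vertices carries a new disjoint edge; bounded codegrees leave few hyperedges that fail this. -/
theorem IsBergeCopy.sum_matchingG_one [Fintype α] {F : SimpleGraph α} {a : ℕ}
    (hr : ∀ e ∈ H, #e = r) (hD : ∀ S : Finset V, #S = r - 1 → #{e ∈ H | S ⊆ e} ≤ D)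
    (hα : Fintype.card α ≤ a) (hH : a.choose (r - 1) * D + a.choose 2 < #H)
    (hF : IsBergeCopy F H) : IsBergeCopy (F ⊕g matchingG 1) H := by
  classical
  obtain ⟨f, φ, hfφ⟩ : ∃ f φ, IsBergeEmbedding F H f φ := hF
  set T := univ.image f
  have hT : #T ≤ a := card_image_le.trans (by rwa [card_univ])
  have hbad : #{e ∈ H | r - 1 ≤ #(e ∩ T)} ≤ a.choose (r - 1) * D :=
    (card_filter_le_card_inter_le hD T).trans (Nat.mul_le_mul_right _ (Nat.choose_le_choose _ hT))
  have hused : #(F.edgeFinset.image φ) ≤ a.choose 2 :=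
    card_image_le.trans (card_edgeFinset_le_card_choose_two.trans (Nat.choose_le_choose _ hα))
  obtain ⟨g, hgH, hg⟩ : ∃ g ∈ H, g ∉ {e ∈ H | r - 1 ≤ #(e ∩ T)} ∪ F.edgeFinset.image φ := by
    by_contra! h
    have := (card_le_card h).trans (card_union_le _ _)
    omega
  simp only [mem_union, mem_filter, mem_image, mem_edgeFinset, not_or, not_and, not_le,
    not_exists] at hg
  have hgInter : #(g ∩ T) < r - 1 := hg.1 hgH
  have hgT : 1 < #(g \ T) := by
    have := card_sdiff_add_card_inter g T
    have := hr g hgH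
    omega
  obtain ⟨y, hy, z, hz, hyz⟩ := one_lt_card.1 hgT
  rw [mem_sdiff] at hy hz
  obtain ⟨ψ, hψ, hψg⟩ := exists_isBergeEmbedding_matchingG (H := H)
    (m := fun q : Fin 1 × Fin 2 => ![y, z] q.2)
    (gs := fun _ => g) (fun p q hpq => Prod.ext (Subsingleton.elim _ _) (by
      revert hpq; fin_cases p <;> fin_cases q <;> simp [hyz, Ne.symm hyz]))
    (Function.injective_of_subsingleton _) (fun _ => hgH)
    fun _ b => by fin_cases b <;> simp [hy, hz]
  refine hfφ.sum hψ (fun a q h => ?_) fun e he e' he' hee' => ?_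
  · have hfa : f a ∈ T := mem_image_of_mem f (mem_univ a)
    fin_cases q <;> simp_all
  · obtain ⟨_, hge'⟩ := hψg e' he'
    exact hg.2 e he (hee'.trans hge'.symm)

theorem IsBergeCopy.sum_matchingG [Fintype α] {F : SimpleGraph α} {t a : ℕ}
    (hr : ∀ e ∈ H, #e = r) (hD : ∀ S : Finset V, #S = r - 1 → #{e ∈ H | S ⊆ e} ≤ D)
    (hα : Fintype.card α + 2 * t ≤ a) (hH : a.choose (r - 1) * D + a.choose 2 < #H)
    (hF : IsBergeCopy F H) : IsBergeCopy (F ⊕g matchingG t) H := by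
  induction t with
  | zero => exact hF.mono (sum_matchingG_zero_isContained F)
  | succ j ih =>
    refine ((ih (by omega)).sum_matchingG_one hr hD ?_ hH).mono
      (sum_matchingG_succ_isContained F j)
    simp only [Fintype.card_sum, Fintype.card_prod, Fintype.card_fin]
    omega

end Greedy

section Codegree

variable [DecidableEq V] {H : Finset (Finset V)}

theorem exists_injective_insert_mem {ι : Type*} [Fintype ι] {S : Finset V}
    (hS : ∀ e ∈ H, S ⊆ e → #e = #S + 1) (hι : Fintype.card ι ≤ #{e ∈ H | S ⊆ e}) :
    ∃ w : ι → V, Function.Injective w ∧ ∀ i, w i ∉ S ∧ insert (w i) S ∈ H := by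
  obtain ⟨E⟩ := Function.Embedding.nonempty_of_card_le (hι.trans_eq (Fintype.card_coe _).symm)
  have hE : ∀ i, (E i : Finset V) ∈ H ∧ S ⊆ E i := fun i => mem_filter.1 (E i).2
  have hpetal : ∀ i, ∃ w, (E i : Finset V) \ S = {w} := fun i => card_eq_one.1 <| by
    rw [card_sdiff_of_subset (hE i).2, hS _ (hE i).1 (hE i).2]
    omega
  choose w hw using hpetal
  have hwE : ∀ i, insert (w i) S = E i := fun i => by
    rw [insert_eq, ← hw i, sdiff_union_of_subset (hE i).2]
  refine ⟨w, fun i j hij => E.injective (Subtype.ext ?_), fun i => ⟨fun hwS => ?_, ?_⟩⟩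
  · rw [← hwE, ← hwE, hij]
  · simpa [hwS] using (hw i).symm.subset (mem_singleton_self (w i))
  · exact hwE i ▸ (hE i).1

/-- The star takes `ℓ` of the hyperedges, centred in `S`; each of the other `t` joins its petal
to a further vertex of `S`. -/
theorem isBergeCopy_of_card_filter_superset {ℓ t : ℕ} {S : Finset V}
    (hS : ∀ e ∈ H, S ⊆ e → #e = #S + 1) (htS : t < #S) (hcard : ℓ + t ≤ #{e ∈ H | S ⊆ e}) :
    IsBergeCopy (starsG 1 ℓ ⊕g matchingG t) H := by
  obtain ⟨w, hw, hwS⟩ := exists_injective_insert_mem (ι := Fin ℓ ⊕ Fin t) hS (by simpa)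
  obtain ⟨v, hv⟩ := card_pos.1 (Nat.zero_lt_of_lt htS)
  obtain ⟨c⟩ : Nonempty (Fin t ↪ S.erase v) :=
    Function.Embedding.nonempty_of_card_le (by simp [card_erase_of_mem hv]; omega)
  have hcS : ∀ j, (c j : V) ∈ S ∧ (c j : V) ≠ v := fun j => (mem_erase.1 (c j).2).symm
  have hne : ∀ {x}, x ∈ S → ∀ i, w i ≠ x := fun hx i h => (hwS i).1 (h ▸ hx)
  have hins : Function.Injective fun i => insert (w i) S :=
    fun i j hij => hw ((insert_inj (hwS i).1).1 hij)
  obtain ⟨φ, hφ, hφes⟩ := exists_isBergeEmbedding_starsG_one (H := H) (v := v)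
    (hw.comp Sum.inl_injective) (fun i => hne hv _) (hins.comp Sum.inl_injective)
    (fun i => (hwS _).2) (fun i => mem_insert_of_mem hv) (fun i => mem_insert_self _ _)
  obtain ⟨ψ, hψ, hψgs⟩ := exists_isBergeEmbedding_matchingG (H := H)
    (m := fun q => ![(c q.1 : V), w (.inr q.1)] q.2)
    (fun ⟨j, b⟩ ⟨j', b'⟩ h => by
      fin_cases b <;> fin_cases b' <;>
        simp_all [c.injective.eq_iff, hw.eq_iff, (hne (hcS _).1 _).symm, hne (hcS _).1])
    (hins.comp Sum.inr_injective) (fun j => (hwS _).2)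
    (fun j b => by fin_cases b <;> simp [(hcS j).1])
  refine hφ.sum hψ (fun ⟨_, i⟩ ⟨j, b⟩ => ?_) fun e he e' he' hee' => ?_
  · cases i using Fin.cases <;> fin_cases b <;>
      simp [(hcS j).2.symm, (hne hv _).symm, hne (hcS j).1, hw.eq_iff]
  · obtain ⟨i, hi⟩ := hφes e he
    obtain ⟨j, hj⟩ := hψgs e' he'
    exact Sum.inl_ne_inr (hins (hi.trans (hee'.trans hj.symm)))

end Codegree

theorem Nat.choose_add_sub_le {s u m : ℕ} (hs : 1 ≤ s) (hsm : s < m) (hu : u ≤ m) :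
    u.choose s + (m - u) ≤ m.choose s := by
  induction m, hsm using Nat.le_induction generalizing u with
  | base =>
    rw [Nat.choose_succ_self_right]
    rcases Nat.lt_or_ge u s with hus | hsu
    · rw [Nat.choose_eq_zero_of_lt hus]
      omega
    · rcases hu.eq_or_lt with rfl | hu
      · simp [Nat.choose_succ_self_right]
      · obtain rfl : u = s := by omega
        simp
        omega
  | succ m hsm ih =>
    rcases hu.eq_or_lt with rfl | hu
    · simp
    · have := ih (Nat.lt_succ_iff.1 hu)
      obtain ⟨s, rfl⟩ : ∃ s', s = s' + 1 := ⟨s - 1, by omega⟩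
      have := Nat.choose_pos (show s ≤ m by omega)
      rw [Nat.choose_succ_succ']
      omega

theorem exists_injective_of_card_le_card_biUnion_add {ι β : Type*} [Fintype ι] [DecidableEq β]
    (t : ι → Finset β) {k δ : ℕ} (ht : ∀ s : Finset ι, #s ≤ #(s.biUnion t) + δ)
    (hk : k + δ ≤ Fintype.card ι) :
    ∃ (g : Fin k → ι) (x : Fin k → β), Function.Injective g ∧ Function.Injective x ∧
      ∀ j, x j ∈ t (g j) := by
  classical
  -- Padding every `t i` with the same `δ` new elements turns the hypothesis into Hall's condition.
  obtain ⟨f, hf, hft⟩ := (all_card_le_biUnion_card_iff_exists_injective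
    fun i => (t i).disjSum (univ : Finset (Fin δ))).1 fun s => by
      rcases s.eq_empty_or_nonempty with rfl | ⟨i₀, hi₀⟩
      · simp
      calc #s ≤ #((s.biUnion t).disjSum (univ : Finset (Fin δ))) := by simpa using ht s
        _ ≤ _ := card_le_card fun x hx => by
          rcases x with b | d
          · obtain ⟨i, hi, hb⟩ := mem_biUnion.1 (inl_mem_disjSum.1 hx)
            exact mem_biUnion.2 ⟨i, hi, inl_mem_disjSum.2 hb⟩
          · exact mem_biUnion.2 ⟨i₀, hi₀, inr_mem_disjSum.2 (mem_univ d)⟩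
  have hright : #{i | (f i).isRight} ≤ δ := by
    simpa using card_le_card_of_injOn f (t := (∅ : Finset β).disjSum (univ : Finset (Fin δ)))
      (fun i hi => by
        obtain ⟨d, hd⟩ := Sum.isRight_iff.1 (mem_filter.1 hi).2
        simp [hd]) hf.injOn
  obtain ⟨e⟩ : Nonempty (Fin k ↪ {i // (f i).isLeft}) := by
    refine Function.Embedding.nonempty_of_card_le ?_
    have := card_filter_add_card_filter_not (s := univ) fun i => (f i).isLeft
    simp only [Bool.not_eq_true, Sum.isLeft_eq_false, card_univ] at this
    rw [Fintype.card_fin, Fintype.card_subtype]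
    omega
  refine ⟨fun j => e j, fun j => (f (e j)).getLeft (e j).2,
    Subtype.val_injective.comp e.injective, fun j j' hjj' => e.injective (Subtype.ext (hf ?_)),
    fun j => ?_⟩
  · rw [← Sum.inl_getLeft (f (e j)) (e j).2, ← Sum.inl_getLeft (f (e j')) (e j').2]
    exact congrArg Sum.inl hjj'
  · have := hft (e j)
    rw [← Sum.inl_getLeft (f (e j)) (e j).2, inl_mem_disjSum] at this
    exact this

section Degree

variable [DecidableEq V]

theorem exists_distinct_representatives_of_choose_lt_card {L : Finset (Finset V)} {s m : ℕ}
    (hL : ∀ e ∈ L, #e = s) (hs : 1 ≤ s) (hsm : s < m) (hcard : m.choose s < #L) :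
    ∃ (es : Fin (m + 1) → Finset V) (x : Fin (m + 1) → V), Function.Injective es ∧
      Function.Injective x ∧ ∀ i, es i ∈ L ∧ x i ∈ es i := by
  have hm : m ≤ m.choose s := by
    have := Nat.choose_add_sub_le hs hsm (Nat.zero_le m)
    rwa [Nat.choose_eq_zero_of_lt hs, zero_add, Nat.sub_zero] at this
  have hall : ∀ P : Finset L, #P ≤ #(P.biUnion fun e => (e : Finset V)) + (#L - (m + 1)) := by
    intro P
    set U := P.biUnion fun e : L => (e : Finset V)
    have hP : #P ≤ #L := (card_le_univ P).trans_eq (Fintype.card_coe L)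
    rcases Nat.lt_or_ge m #U with hU | hU
    · omega
    have hPU : #P ≤ (#U).choose s := by
      rw [← card_powersetCard]
      exact card_le_card_of_injOn (fun e : L => (e : Finset V))
        (fun e he => mem_powersetCard.2 ⟨subset_biUnion_of_mem _ he, hL _ e.2⟩)
        Subtype.val_injective.injOn
    have := Nat.choose_add_sub_le hs hsm hU
    omega
  obtain ⟨g, x, hg, hx, hgx⟩ := exists_injective_of_card_le_card_biUnion_add (k := m + 1) _ hall
    (by rw [Fintype.card_coe]; omega)
  exact ⟨fun i => g i, x, Subtype.val_injective.comp hg, hx, fun i => ⟨(g i).2, hgx i⟩⟩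

/-- Otherwise the link of `v` has `ℓ` members with distinct representatives, the leaves of a
Berge star. -/
theorem card_filter_mem_le_of_not_isBergeCopy_starsG {H : Finset (Finset V)} {ℓ r : ℕ}
    (hr : ∀ e ∈ H, #e = r) (h2r : 2 ≤ r) (hrℓ : r < ℓ)
    (hstar : ¬ IsBergeCopy (starsG 1 ℓ) H) (v : V) :
    #{e ∈ H | v ∈ e} ≤ (ℓ - 1).choose (r - 1) := by
  obtain ⟨ℓ, rfl⟩ : ∃ m, ℓ = m + 1 := ⟨ℓ - 1, by omega⟩
  by_contra! hdeg
  set L := {e ∈ H | v ∈ e}.image (·.erase v)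
  have hLcard : #L = #{e ∈ H | v ∈ e} :=
    card_image_of_injOn ((erase_injOn' v).mono fun e he => (mem_filter.1 he).2)
  have hL : ∀ e ∈ L, #e = r - 1 ∧ v ∉ e ∧ insert v e ∈ H := by
    simp only [L, mem_image, mem_filter]
    rintro _ ⟨e, ⟨heH, hve⟩, rfl⟩
    exact ⟨by rw [card_erase_of_mem hve, hr e heH], notMem_erase v e,
      by rwa [insert_erase hve]⟩
  obtain ⟨es, x, hes, hx, hesx⟩ := exists_distinct_representatives_of_choose_lt_card (m := ℓ)
    (fun e he => (hL e he).1) (by omega) (by omega) (by simpa [hLcard] using hdeg)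
  have hv : ∀ i, v ∉ es i := fun i => (hL _ (hesx i).1).2.1
  obtain ⟨φ, hφ, -⟩ := exists_isBergeEmbedding_starsG_one (H := H) (v := v) hx
    (fun i hxv => hv i (hxv ▸ (hesx i).2))
    (fun i j hij => hes (by simpa [erase_insert (hv _)] using congrArg (·.erase v) hij))
    (fun i => (hL _ (hesx i).1).2.2) (fun i => mem_insert_self v _)
    (fun i => mem_insert_of_mem (hesx i).2)
  exact hstar hφ.isBergeCopy

end Degree

section UpperBound

variable [Fintype V] [DecidableEq V] {H : Finset (Finset V)} {r : ℕ}

theorem card_mul_le_of_card_filter_mem_le {d : ℕ} (hr : ∀ e ∈ H, #e = r)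
    (hdeg : ∀ v, #{e ∈ H | v ∈ e} ≤ d) : #H * r ≤ Fintype.card V * d := by
  have := sum_card_inter_le (s := univ) (B := H) fun v _ => hdeg v
  simp only [univ_inter, card_univ] at this
  rwa [sum_congr rfl hr, sum_const, smul_eq_mul] at this

theorem card_mul_le_of_not_isBergeCopy {ℓ t : ℕ} (hr : ∀ e ∈ H, #e = r) (h2r : 2 ≤ r)
    (hrℓ : r < ℓ) (htr : t + 2 ≤ r) (hfree : ¬ IsBergeCopy (starsG 1 ℓ ⊕g matchingG t) H)
    (hH : (ℓ + 1 + 2 * t).choose (r - 1) * (ℓ + t) + (ℓ + 1 + 2 * t).choose 2 < #H) :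
    #H * ℓ ≤ Fintype.card V * ℓ.choose r := by
  have hcodeg : ∀ S : Finset V, #S = r - 1 → #{e ∈ H | S ⊆ e} ≤ ℓ + t := fun S hS => by
    by_contra! h
    exact hfree (isBergeCopy_of_card_filter_superset (fun e he _ => by rw [hr e he]; omega)
      (by omega) h.le)
  have hstar : ¬ IsBergeCopy (starsG 1 ℓ) H :=
    fun h => hfree (h.sum_matchingG hr hcodeg (by simp) hH)
  have hdeg := card_mul_le_of_card_filter_mem_le hr
    (card_filter_mem_le_of_not_isBergeCopy_starsG hr h2r hrℓ hstar)
  have hchoose : ℓ * (ℓ - 1).choose (r - 1) = ℓ.choose r * r := by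
    have := Nat.add_one_mul_choose_eq (ℓ - 1) (r - 1)
    rwa [Nat.sub_add_cancel (by omega : 1 ≤ ℓ), Nat.sub_add_cancel (by omega : 1 ≤ r)] at this
  refine Nat.le_of_mul_le_mul_right ?_ (by omega : 0 < r)
  calc #H * ℓ * r = #H * r * ℓ := by ring
    _ ≤ Fintype.card V * (ℓ - 1).choose (r - 1) * ℓ := Nat.mul_le_mul_right ℓ hdeg
    _ = Fintype.card V * ℓ.choose r * r := by rw [mul_assoc, mul_comm _ ℓ, hchoose]; ring

end UpperBound

section LowerBound

variable [Fintype V] [DecidableEq V] [DecidableEq β]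

theorem not_isBergeCopy_starsG_of_card_fiber_le {H : Finset (Finset V)} {ℓ : ℕ} {p : V → β}
    (hH : ∀ e ∈ H, ∃ b, ∀ v ∈ e, p v = b) (hp : ∀ b, #{v | p v = b} ≤ ℓ) :
    ¬ IsBergeCopy (starsG 1 ℓ) H := by
  rintro ⟨f, φ, hf, -, hφ⟩
  have hfiber : ∀ i, p (f (0, i)) = p (f (0, 0)) := by
    intro i
    rcases eq_or_ne i 0 with rfl | hi
    · rfl
    have hedge : s((0, i), (0, 0)) ∈ (starsG 1 ℓ).edgeSet := by simp [starsG, hi]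
    obtain ⟨b, hb⟩ := hH _ (hφ _ hedge).1
    rw [hb _ ((hφ _ hedge).2 _ (Sym2.mem_mk_left _ _)),
      hb _ ((hφ _ hedge).2 _ (Sym2.mem_mk_right _ _))]
  have := card_le_card (s := univ.image fun i => f (0, i)) (t := {v | p v = p (f (0, 0))})
    fun v hv => by obtain ⟨i, -, rfl⟩ := mem_image.1 hv; simpa using hfiber i
  rw [card_image_of_injective _ fun i j h => (Prod.mk.inj (hf h)).2, card_univ,
    Fintype.card_fin] at this
  exact absurd (this.trans (hp _)) (by omega)

def fiberCliques [Fintype β] (p : V → β) (r : ℕ) : Finset (Finset V) :=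
  univ.biUnion fun b => ({v | p v = b} : Finset V).powersetCard r

theorem card_fiberCliques [Fintype β] {p : V → β} {r : ℕ} (hr : 1 ≤ r) :
    #(fiberCliques p r) = ∑ b, (#{v | p v = b}).choose r := by
  rw [fiberCliques, card_biUnion]
  · simp only [card_powersetCard]
  intro b _ b' _ hbb'
  refine disjoint_left.2 fun e he he' => ?_
  rw [mem_powersetCard] at he he'
  obtain ⟨v, hv⟩ := card_pos.1 (he.2.symm ▸ hr)
  exact hbb' ((mem_filter.1 (he.1 hv)).2.symm.trans (mem_filter.1 (he'.1 hv)).2)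

theorem not_isBergeCopy_starsG_fiberCliques [Fintype β] {ℓ r : ℕ} {p : V → β}
    (hp : ∀ b, #{v | p v = b} ≤ ℓ) : ¬ IsBergeCopy (starsG 1 ℓ) (fiberCliques p r) := by
  refine not_isBergeCopy_starsG_of_card_fiber_le (fun e he => ?_) hp
  obtain ⟨b, -, he⟩ := mem_biUnion.1 he
  exact ⟨b, fun v hv => (mem_filter.1 ((mem_powersetCard.1 he).1 hv)).2⟩

theorem card_eq_of_mem_fiberCliques [Fintype β] {p : V → β} {r : ℕ} {e : Finset V}
    (he : e ∈ fiberCliques p r) : #e = r := by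
  obtain ⟨b, -, he⟩ := mem_biUnion.1 he
  exact (mem_powersetCard.1 he).2

end LowerBound

section Extremal

variable {F : SimpleGraph α} {r n : ℕ}

theorem exBerge_le {m : ℕ}
    (h : ∀ H : Finset (Finset (Fin n)), (∀ e ∈ H, #e = r) → ¬ IsBergeCopy F H → #H ≤ m) :
    exBerge r n F ≤ m :=
  csSup_le' fun _ ⟨H, hr, hF, hH⟩ => hH ▸ h H hr hF

theorem le_exBerge {H : Finset (Finset (Fin n))} (hr : ∀ e ∈ H, #e = r)
    (hF : ¬ IsBergeCopy F H) : #H ≤ exBerge r n F :=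
  le_csSup ⟨Fintype.card (Finset (Fin n)), fun _ ⟨H', _, _, hH'⟩ => hH' ▸ card_le_univ H'⟩
    ⟨H, hr, hF, rfl⟩

theorem exBerge_starsG_sum_matchingG_mul_le {ℓ t : ℕ} (h2r : 2 ≤ r) (hrℓ : r < ℓ)
    (htr : t + 2 ≤ r)
    (hn : ((ℓ + 1 + 2 * t).choose (r - 1) * (ℓ + t) + (ℓ + 1 + 2 * t).choose 2) * ℓ ≤ n) :
    exBerge r n (starsG 1 ℓ ⊕g matchingG t) * ℓ ≤ n * ℓ.choose r := by
  rw [← Nat.le_div_iff_mul_le (by omega)]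
  refine exBerge_le fun H hr hfree => (Nat.le_div_iff_mul_le (by omega)).2 ?_
  rcases le_or_gt #H ((ℓ + 1 + 2 * t).choose (r - 1) * (ℓ + t) + (ℓ + 1 + 2 * t).choose 2)
    with hH | hH
  · exact (Nat.mul_le_mul_right ℓ hH).trans
      (hn.trans (Nat.le_mul_of_pos_right n (Nat.choose_pos hrℓ.le)))
  · simpa using card_mul_le_of_not_isBergeCopy hr h2r hrℓ htr hfree hH

theorem le_exBerge_starsG_sum_matchingG {ℓ t : ℕ} (hr : 1 ≤ r) (hdvd : ℓ ∣ n) :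
    n / ℓ * ℓ.choose r ≤ exBerge r n (starsG 1 ℓ ⊕g matchingG t) := by
  obtain ⟨m, rfl⟩ := hdvd
  rcases ℓ.eq_zero_or_pos with rfl | hℓ
  · simp
  let p : Fin (ℓ * m) → Fin m := fun v => (finProdFinEquiv.symm v).2
  have hp : ∀ b, #{v | p v = b} = ℓ := fun b => by
    rw [card_equiv finProdFinEquiv.symm (t := univ ×ˢ {b}) (by simp [p, eq_comm])]
    simp
  have := le_exBerge (F := starsG 1 ℓ ⊕g matchingG t) (fun e he => card_eq_of_mem_fiberCliques he)
    fun h => not_isBergeCopy_starsG_fiberCliques (r := r) (fun b => (hp b).le)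
      (h.mono Embedding.sumInl.isContained)
  rw [card_fiberCliques hr, sum_congr rfl fun b _ => by rw [hp b], sum_const, card_univ,
    Fintype.card_fin, smul_eq_mul] at this
  rwa [Nat.mul_div_cancel_left m hℓ]

end Extremal

theorem ex_berge_star_union_matching_large (ℓ k r : ℕ) (hk : 2 ≤ k)
    (hkr : k < r) (hlr : r + 1 < ℓ) :
    ∃ N, ∀ n ≥ N,
      exBerge r n ((starsG 1 ℓ).sum (matchingG (k - 1))) * ℓ ≤ n * ℓ.choose r ∧
      (ℓ ∣ n →
        exBerge r n ((starsG 1 ℓ).sum (matchingG (k - 1))) = (n / ℓ) * ℓ.choose r) := by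
  refine ⟨((ℓ + 1 + 2 * (k - 1)).choose (r - 1) * (ℓ + (k - 1)) +
    (ℓ + 1 + 2 * (k - 1)).choose 2) * ℓ, fun n hn => ?_⟩
  have hupper := exBerge_starsG_sum_matchingG_mul_le (by omega) (by omega) (by omega) hn
  refine ⟨hupper, fun hdvd => le_antisymm ?_ (le_exBerge_starsG_sum_matchingG (by omega) hdvd)⟩
  refine Nat.le_of_mul_le_mul_right ?_ (by omega : 0 < ℓ)
  rwa [mul_right_comm, Nat.div_mul_cancel hdvd]
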